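/- There exists an AS graph with consistent business relationships and a partial S*BGP deployment in which, if one AS places the secure-route preference above local preference while another places it below local preference, the routing system has two distinct stable states; in particular, after a link failure and recovery, the system can settle into a stable state different from the original one (a BGP Wedgie). -/

import Mathlib

open scoped Classical

namespace SBGP

/-- Business relationship of a neighbor, from the point of view of a given AS. -/
inductive Rel
  | customer
  | peer
  | provider
deriving DecidableEq

/-- The three positions at which the secure-route preference step can be inserted. -/
inductive SecModel
  | first
  | second
  | third
deriving DecidableEq

/-- An AS-level graph with business relationships on its edges. -/
structure ASGraph (V : Type*) where
  adj : V → V → Bool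
  /-- `rel u v` is the relationship of `v` as seen from `u`
      (`customer` means `v` is `u`'s customer, etc.). -/
  rel : V → V → Rel
  adj_symm : ∀ u v, adj u v = adj v u
  adj_irrefl : ∀ v, adj v v = false
  rel_consistent : ∀ u v, adj u v = true →
    ((rel u v = Rel.customer ↔ rel v u = Rel.provider) ∧
     (rel u v = Rel.peer ↔ rel v u = Rel.peer))

variable {V : Type*}

def lpRank : Rel → ℕ
  | Rel.customer => 0
  | Rel.peer => 1
  | Rel.provider => 2

/-- The relationship of the next hop of a route (`none` for trivial routes). -/
def nextRel (G : ASGraph V) : List V → Option Rel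
  | a :: b :: _ => some (G.rel a b)
  | _ => none

/-- Local-preference value of a route (customer < peer < provider). -/
def lpVal (G : ASGraph V) : List V → ℕ
  | a :: b :: _ => lpRank (G.rel a b)
  | _ => 0

/-- `R` is a (nonempty) path in `G`. -/
def IsPath (G : ASGraph V) : List V → Prop
  | [] => False
  | [_] => True
  | a :: b :: rest => G.adj a b = true ∧ IsPath G (b :: rest)

/-- `R` is a simple route in `G` ending at `d`. -/
def IsRouteTo (G : ASGraph V) (R : List V) (d : V) : Prop :=
  R.Nodup ∧ IsPath G R ∧ R.getLast? = some d

/-- The export rule (Ex) along a route `a :: b :: c :: …`: each internal AS `b`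
announces its route (with next hop `c`) to `a` only if that route is a customer
route of `b`, or `a` is `b`'s customer. -/
def ExportOK (G : ASGraph V) : List V → Prop
  | a :: b :: c :: rest =>
      (G.rel b c = Rel.customer ∨ G.rel b a = Rel.customer) ∧
      ExportOK G (b :: c :: rest)
  | _ => True

/-- A route is secure iff every AS on it has deployed S*BGP and it does not
contain the attacker (the bogus route is insecure even if the attacker is in `S`). -/
def SecureRoute (S : Finset V) (m : Option V) (R : List V) : Prop :=
  (∀ v ∈ R, v ∈ S) ∧ (∀ m', m = some m' → m' ∉ R)

/-- A legitimate route: ends at the destination `d` and avoids the attacker. -/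
def LegitRoute (m : Option V) (d : V) (R : List V) : Prop :=
  R.getLast? = some d ∧ ∀ m', m = some m' → m' ∉ R

/-- Perceivable routes at `s` for destination `d` when the (optional) attacker `m`
announces the bogus path "m,d": either a genuine export-compliant route to `d`
avoiding `m`, or an export-compliant route to `m` extended by `m`'s claimed
(possibly nonexistent) edge to `d`. -/
def Perceivable (G : ASGraph V) (m : Option V) (d : V) (s : V) (R : List V) : Prop :=
  R.head? = some s ∧
  ((IsRouteTo G R d ∧ ExportOK G R ∧ ∀ m', m = some m' → m' ∉ R) ∨
   (∃ m' R', m = some m' ∧ R = R' ++ [d] ∧ IsRouteTo G R' m' ∧ d ∉ R' ∧ ExportOK G R'))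

/-- The rank of a route (smaller is better), encoding lexicographically the
ranking steps of the given security model: LP (customer > peer > provider),
SP (shorter > longer) and SecP (secure > insecure), in the order determined by
the model.  All components are `< Fintype.card V + 2`, so the encoding is
faithful on simple routes. -/
noncomputable def rankNat [Fintype V] (G : ASGraph V) (S : Finset V) (m : Option V)
    (mdl : SecModel) (R : List V) : ℕ :=
  let B := Fintype.card V + 2
  let lp := lpVal G R
  let len := R.length
  let sec : ℕ := if SecureRoute S m R then 0 else 1
  match mdl with
  | SecModel.first => sec * B * B + lp * B + len
  | SecModel.second => lp * B * B + sec * B + len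
  | SecModel.third => lp * B * B + len * B + sec

/-- `n` exports the route `R` (its currently selected route) to neighbor `s`:
always if `R` is a customer route of `n` or `n` originates `R`; otherwise only
if `s` is `n`'s customer. -/
def exportsTo (G : ASGraph V) (n s : V) : List V → Prop
  | _ :: c :: _ => G.rel n c = Rel.customer ∨ G.rel n s = Rel.customer
  | _ => True

/-- Routes available to `s` given the current selections `σ` of all ASes:
routes exported by neighbors (with BGP loop detection), together with the
attacker's bogus announcement "m,d" to each of its neighbors. -/
def Avail (G : ASGraph V) (m : Option V) (d : V) (σ : V → List V) (s : V)
    (R : List V) : Prop :=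
  (∃ n, G.adj s n = true ∧ (∀ m', m = some m' → n ≠ m') ∧ σ n ≠ [] ∧
      (σ n).head? = some n ∧ s ∉ σ n ∧ exportsTo G n s (σ n) ∧ R = s :: σ n) ∨
  (∃ m', m = some m' ∧ G.adj s m' = true ∧ s ≠ d ∧ R = [s, m', d])

/-- A stable routing state for destination `d`, secure deployment `S`,
attacker `m`, security model `mdl` and tiebreak `tb`: every AS (other than the
destination and the attacker) selects the best available route, where ties in
rank are broken by the strict tiebreak `tb`. -/
def Stable [Fintype V] (G : ASGraph V) (tb : V → List V → ℕ) (S : Finset V)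
    (m : Option V) (d : V) (mdl : SecModel) (σ : V → List V) : Prop :=
  σ d = [d] ∧
  (∀ m', m = some m' → σ m' = []) ∧
  ∀ s, s ≠ d → (∀ m', m = some m' → s ≠ m') →
    ((σ s = [] ∧ ∀ R, ¬ Avail G m d σ s R) ∨
     (Avail G m d σ s (σ s) ∧
      ∀ R, Avail G m d σ s R → R ≠ σ s →
        rankNat G S m mdl (σ s) < rankNat G S m mdl R ∨
        (rankNat G S m mdl (σ s) = rankNat G S m mdl R ∧ tb s (σ s) < tb s R)))

/-- `s` is happy: it selects a legitimate route to `d`, avoiding the attacker. -/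
def Happy (m : Option V) (d : V) (σ : V → List V) (s : V) : Prop :=
  σ s ≠ [] ∧ (σ s).getLast? = some d ∧ ∀ m', m = some m' → m' ∉ σ s

/-- The set of most-preferred perceivable routes of `s` (before the tiebreak step). -/
def BPR [Fintype V] (G : ASGraph V) (S : Finset V) (m : Option V) (d : V)
    (mdl : SecModel) (s : V) (R : List V) : Prop :=
  Perceivable G m d s R ∧
  ∀ R', Perceivable G m d s R' → rankNat G S m mdl R ≤ rankNat G S m mdl R'

/-- The number of happy source ASes (sources other than `m` and `d`). -/
noncomputable def happyCount [Fintype V] [DecidableEq V] (m d : V)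
    (σ : V → List V) : ℕ :=
  (Finset.univ.filter fun s => s ≠ m ∧ s ≠ d ∧ Happy (some m) d σ s).card

/-- The customer-provider hierarchy is acyclic. -/
def Hierarchy (G : ASGraph V) : Prop :=
  ∃ h : V → ℕ, ∀ u v, G.adj u v = true → G.rel u v = Rel.customer → h v < h u

/-- The tiebreak of every AS is deterministic (injective on routes). -/
def InjTB (tb : V → List V → ℕ) : Prop :=
  ∀ s, Function.Injective (tb s)

end SBGP
namespace SBGP

/-- Stable routing state when ASes may place the secure-route preference step
at different (per-AS) positions in their route selection. -/
def StableH {V : Type*} [Fintype V] (G : ASGraph V) (tb : V → List V → ℕ)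
    (S : Finset V) (m : Option V) (d : V) (mdl : V → SecModel)
    (σ : V → List V) : Prop :=
  σ d = [d] ∧
  (∀ m', m = some m' → σ m' = []) ∧
  ∀ s, s ≠ d → (∀ m', m = some m' → s ≠ m') →
    ((σ s = [] ∧ ∀ R, ¬ Avail G m d σ s R) ∨
     (Avail G m d σ s (σ s) ∧
      ∀ R, Avail G m d σ s R → R ≠ σ s →
        rankNat G S m (mdl s) (σ s) < rankNat G S m (mdl s) R ∨
        (rankNat G S m (mdl s) (σ s) = rankNat G S m (mdl s) R ∧
          tb s (σ s) < tb s R)))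


/-! The four ASes form the customer chain `1 → 2 → 3 → 0` (each AS a provider of the next) plus a
peering link `1 – 0`; only `3` is insecure. AS `1` ranks local preference first, so it keeps the
customer route `1 2 3 0` whenever `2` announces it and otherwise uses its secure peer route `1 0`.
AS `2` ranks security first, so it takes the secure provider route `2 1 0` whenever `1` announces
it and otherwise its insecure customer route `2 3 0`. Hence both the state in which everyone
routes along the customer chain and the one in which `1` and `2` route securely are stable; a
failure and recovery of the link `1 – 0` moves the system from the second to the first for good. -/

section Rank

variable {V : Type*} {G : ASGraph V} {S : Finset V} {m : Option V} {R R' : List V}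

theorem secureRoute_none_iff : SecureRoute S none R ↔ ∀ v ∈ R, v ∈ S := by
  simp [SecureRoute]

theorem lpVal_le_two (G : ASGraph V) (R : List V) : lpVal G R ≤ 2 := by
  match R with
  | a :: b :: _ => cases h : G.rel a b <;> simp [lpVal, lpRank, h]
  | [] | [_] => simp [lpVal]

variable [Fintype V]

theorem rankNat_first_lt_of_secure (hR : SecureRoute S m R) (hR' : ¬ SecureRoute S m R')
    (hnd : R.Nodup) : rankNat G S m .first R < rankNat G S m .first R' := by
  simp only [rankNat, if_pos hR, if_neg hR']
  rcases R with _ | ⟨a, R⟩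
  · simp [lpVal]
  · have hcard : 0 < Fintype.card V := Fintype.card_pos_iff.2 ⟨a⟩
    have hlen := hnd.length_le_card
    have hlp := lpVal_le_two G (a :: R)
    nlinarith

theorem rankNat_lt_of_lpVal_lt {mdl : SecModel} (hmdl : mdl ≠ .first) (hnd : R.Nodup)
    (hlp : lpVal G R < lpVal G R') : rankNat G S m mdl R < rankNat G S m mdl R' := by
  have hlen := hnd.length_le_card
  have hsec : (if SecureRoute S m R then 0 else 1) ≤ 1 := by split_ifs <;> omega
  simp only [rankNat]
  generalize (if SecureRoute S m R then 0 else 1) = sec at hsec ⊢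
  generalize (if SecureRoute S m R' then 0 else 1) = sec'
  generalize Fintype.card V = c at hlen ⊢
  have hstep : (lpVal G R + 1) * (c + 2) * (c + 2) ≤ lpVal G R' * (c + 2) * (c + 2) := by
    gcongr; omega
  cases mdl
  · exact absurd rfl hmdl
  all_goals
    dsimp only
    nlinarith [Nat.mul_le_mul_right (c + 2) hsec, Nat.mul_le_mul_right (c + 2) hlen]

end Rank

section Stability

variable {V : Type*} [Fintype V]

instance instDecidableExportsTo (G : ASGraph V) (n s : V) : ∀ R, Decidable (exportsTo G n s R)
  | [] | [_] => .isTrue trivial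
  | _ :: _ :: _ => inferInstanceAs (Decidable (_ ∨ _))

instance instDecidableAvail [DecidableEq V] (G : ASGraph V) (m : Option V) (d : V)
    (σ : V → List V) (s : V) (R : List V) : Decidable (Avail G m d σ s R) := by
  unfold Avail; infer_instance

theorem stableH_of_strictly_preferred (G : ASGraph V) (tb : V → List V → ℕ) (S : Finset V)
    (d : V) (mdl : V → SecModel) (σ : V → List V) (hd : σ d = [d])
    (hsel : ∀ s, s ≠ d → Avail G none d σ s (σ s))
    (hbest : ∀ s n, s ≠ d → G.adj s n = true → σ n ≠ [] → (σ n).head? = some n → s ∉ σ n →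
      exportsTo G n s (σ n) → s :: σ n ≠ σ s →
      rankNat G S none (mdl s) (σ s) < rankNat G S none (mdl s) (s :: σ n)) :
    StableH G tb S none d mdl σ := by
  refine ⟨hd, nofun, fun s hs _ => .inr ⟨hsel s hs, ?_⟩⟩
  rintro R (⟨n, hadj, -, hne, hhead, hloop, hexp, rfl⟩ | ⟨_, ⟨⟩, -⟩) hR
  exact .inl (hbest s n hs hadj hne hhead hloop hexp hR)

end Stability

section Example

def wedgieAdj : Fin 4 → Fin 4 → Bool := fun u v =>
  match u.val, v.val with
  | 0, 1 | 1, 0 | 1, 2 | 2, 1 | 2, 3 | 3, 2 | 3, 0 | 0, 3 => true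
  | _, _ => false

def wedgieRel : Fin 4 → Fin 4 → Rel := fun u v =>
  match u.val, v.val with
  | 1, 2 | 2, 3 | 3, 0 => .customer
  | 2, 1 | 3, 2 | 0, 3 => .provider
  | _, _ => .peer

def wedgieGraph : ASGraph (Fin 4) where
  adj := wedgieAdj
  rel := wedgieRel
  adj_symm := by decide
  adj_irrefl := by decide
  rel_consistent := by decide

def wedgieDeployment : Finset (Fin 4) := {0, 1, 2}

def wedgieModel (s : Fin 4) : SecModel := if s = 2 then .first else .second

def customerChainState : Fin 4 → List (Fin 4) := ![[0], [1, 2, 3, 0], [2, 3, 0], [3, 0]]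

def secureRoutesState : Fin 4 → List (Fin 4) := ![[0], [1, 0], [2, 1, 0], [3, 0]]

theorem wedgieGraph_hierarchy : Hierarchy wedgieGraph := ⟨![0, 3, 2, 1], by decide⟩

theorem stableH_customerChainState (tb : Fin 4 → List (Fin 4) → ℕ) :
    StableH wedgieGraph tb wedgieDeployment none 0 wedgieModel customerChainState := by
  refine stableH_of_strictly_preferred _ _ _ _ _ _ (by decide) (by decide) ?_
  intro s n hs hadj _ _ hloop _ hR
  obtain ⟨rfl, rfl⟩ : s = 1 ∧ n = 0 := by revert s n; decide
  exact rankNat_lt_of_lpVal_lt (by decide) (by decide) (by decide)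

theorem stableH_secureRoutesState (tb : Fin 4 → List (Fin 4) → ℕ) :
    StableH wedgieGraph tb wedgieDeployment none 0 wedgieModel secureRoutesState := by
  refine stableH_of_strictly_preferred _ _ _ _ _ _ (by decide) (by decide) ?_
  intro s n hs hadj _ _ hloop _ hR
  obtain ⟨rfl, rfl⟩ | ⟨rfl, rfl⟩ : (s = 2 ∧ n = 3) ∨ (s = 3 ∧ n = 2) := by revert s n; decide
  · exact rankNat_first_lt_of_secure (secureRoute_none_iff.2 (by decide))
      (mt secureRoute_none_iff.1 (by decide)) (by decide)
  · exact rankNat_lt_of_lpVal_lt (by decide) (by decide) (by decide)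

end Example

/-- **Inconsistent security placement can create BGP Wedgies.**  There is an AS
graph with consistent business relationships (an acyclic customer-provider
hierarchy), a partial S*BGP deployment `S` and a destination `d` such that if
one AS places the secure-route preference above local preference while another
places it below local preference, the routing system has two distinct stable
states — so after a link failure and recovery the system can settle into a
stable state different from the original one. -/
theorem wedgie_exists :
    ∃ (n : ℕ) (G : ASGraph (Fin n)) (tb : Fin n → List (Fin n) → ℕ)
      (S : Finset (Fin n)) (d a b : Fin n) (mdl : Fin n → SecModel),
      Hierarchy G ∧ InjTB tb ∧
      mdl b = SecModel.first ∧
      (mdl a = SecModel.second ∨ mdl a = SecModel.third) ∧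
      ∃ σ₁ σ₂ : Fin n → List (Fin n),
        StableH G tb S none d mdl σ₁ ∧ StableH G tb S none d mdl σ₂ ∧ σ₁ ≠ σ₂ :=
  ⟨4, wedgieGraph, fun _ => Encodable.encode, wedgieDeployment, 0, 1, 2, wedgieModel,
    wedgieGraph_hierarchy, fun _ => Encodable.encode_injective, rfl, .inl rfl,
    customerChainState, secureRoutesState, stableH_customerChainState _,
    stableH_secureRoutesState _, fun h => absurd (congrFun h 1) (by decide)⟩

end SBGP
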